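/- arXiv:2309.02014 — 3 statements merged into one kernel-verified Lean document; each statement's English description precedes it below -/
import Mathlib

section
/- Let F : ℝ^p → ℝ be twice differentiable and μ-strongly convex with M-Lipschitz Hessian on a compact convex set C of diameter D. Then F is quadratically regular on C with (1 + MD/μ)⁻¹ ≤ γ_ℓ(C) ≤ γ_u(C) ≤ 1 + MD/μ. -/
/-!
Along the segment from `w₁` to `w₂` the second derivative of `F` in the direction `v = w₂ - w₁`
is `‖v‖²_{∇²F(w)}`, so a two-sided bound on it yields the two quadratic bounds by integrating
twice. Such a bound comes from comparing Hessians at two points `w, w'` of `C`: Lipschitz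
continuity gives `‖v‖²_{∇²F(w)} ≤ ‖v‖²_{∇²F(w')} + MD‖v‖²`, and strong convexity absorbs
`MD‖v‖² ≤ (MD/μ)‖v‖²_{∇²F(w')}`. Exchanging `w` and `w'` gives the lower bound.
-/

open Matrix

noncomputable section

/-- The `A`-weighted quadratic form `‖v‖_A² = vᵀ A v`. -/
def quadForm {p : ℕ} (A : Matrix (Fin p) (Fin p) ℝ) (v : Fin p → ℝ) : ℝ :=
  v ⬝ᵥ A.mulVec v

/-- The Euclidean norm of a vector in `ℝ^p`. -/
def euclNorm {p : ℕ} (v : Fin p → ℝ) : ℝ := Real.sqrt (v ⬝ᵥ v)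

open Set

lemma antitoneOn_of_hasDerivAt_nonpos {D : Set ℝ} (hD : Convex ℝ D) {f f' : ℝ → ℝ}
    (hf : ∀ x ∈ D, HasDerivAt f (f' x) x) (hf' : ∀ x ∈ interior D, f' x ≤ 0) :
    AntitoneOn f D :=
  antitoneOn_of_hasDerivWithinAt_nonpos hD
    (fun x hx => (hf x hx).continuousAt.continuousWithinAt)
    (fun x hx => (hf x (interior_subset hx)).hasDerivWithinAt) hf'

theorem le_add_add_half_of_hasDerivAt_le {φ ψ q : ℝ → ℝ} {K : ℝ}
    (hφ : ∀ t ∈ Icc (0 : ℝ) 1, HasDerivAt φ (ψ t) t)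
    (hψ : ∀ t ∈ Icc (0 : ℝ) 1, HasDerivAt ψ (q t) t)
    (hq : ∀ t ∈ Icc (0 : ℝ) 1, q t ≤ K) :
    φ 1 ≤ φ 0 + ψ 0 + K / 2 := by
  have hψ_le : ∀ t ∈ Icc (0 : ℝ) 1, ψ t ≤ ψ 0 + K * t := by
    have hanti : AntitoneOn (fun t => ψ t - K * t) (Icc 0 1) :=
      antitoneOn_of_hasDerivAt_nonpos (convex_Icc 0 1)
        (fun t ht => (hψ t ht).sub ((hasDerivAt_id t).const_mul K))
        (fun t ht => by linarith [hq t (interior_subset ht)])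
    intro t ht
    linarith [hanti (left_mem_Icc.2 zero_le_one) ht ht.1]
  have hanti : AntitoneOn (fun t => φ t - ψ 0 * t - K / 2 * (t * t)) (Icc 0 1) :=
    antitoneOn_of_hasDerivAt_nonpos (convex_Icc 0 1)
      (fun t ht => ((hφ t ht).sub ((hasDerivAt_id t).const_mul (ψ 0))).sub
        (((hasDerivAt_id t).mul (hasDerivAt_id t)).const_mul (K / 2)))
      (fun t ht => by simp only [id]; linarith [hψ_le t (interior_subset ht)])
  linarith [hanti (left_mem_Icc.2 zero_le_one) (right_mem_Icc.2 zero_le_one) zero_le_one]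

theorem add_add_half_le_of_le_hasDerivAt {φ ψ q : ℝ → ℝ} {K : ℝ}
    (hφ : ∀ t ∈ Icc (0 : ℝ) 1, HasDerivAt φ (ψ t) t)
    (hψ : ∀ t ∈ Icc (0 : ℝ) 1, HasDerivAt ψ (q t) t)
    (hq : ∀ t ∈ Icc (0 : ℝ) 1, K ≤ q t) :
    φ 0 + ψ 0 + K / 2 ≤ φ 1 := by
  have := le_add_add_half_of_hasDerivAt_le (φ := -φ) (ψ := -ψ) (q := -q) (K := -K)
    (fun t ht => (hφ t ht).neg) (fun t ht => (hψ t ht).neg) (fun t ht => neg_le_neg (hq t ht))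
  simp only [Pi.neg_apply] at this
  linarith

theorem HasFDerivAt.hasDerivAt_comp_add_smul {𝕜 E G : Type*} [NontriviallyNormedField 𝕜]
    [NormedAddCommGroup E] [NormedSpace 𝕜 E] [NormedAddCommGroup G] [NormedSpace 𝕜 G]
    {f : E → G} {f' : E →L[𝕜] G} {x v : E} {t : 𝕜} (hf : HasFDerivAt f f' (x + t • v)) :
    HasDerivAt (fun s : 𝕜 => f (x + s • v)) (f' v) t :=
  hf.comp_hasDerivAt t <|
    (((hasDerivAt_id t).smul_const v).const_add x).congr_deriv (one_smul 𝕜 v)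

theorem HasDerivAt.dotProduct_const {𝕜 n : Type*} [NontriviallyNormedField 𝕜] [Fintype n]
    {u : 𝕜 → n → 𝕜} {u' : n → 𝕜} {t : 𝕜} (hu : HasDerivAt u u' t) (v : n → 𝕜) :
    HasDerivAt (fun s => u s ⬝ᵥ v) (u' ⬝ᵥ v) t :=
  HasDerivAt.fun_sum fun i _ => (hasDerivAt_pi.1 hu i).mul_const (v i)

section QuadForm

variable {p : ℕ}

lemma Matrix.PosSemidef.quadForm_nonneg {A : Matrix (Fin p) (Fin p) ℝ} (hA : A.PosSemidef)
    (v : Fin p → ℝ) : 0 ≤ quadForm A v := by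
  simpa [quadForm] using hA.dotProduct_mulVec_nonneg v

lemma quadForm_sub (A B : Matrix (Fin p) (Fin p) ℝ) (v : Fin p → ℝ) :
    quadForm (A - B) v = quadForm A v - quadForm B v := by
  simp only [quadForm, sub_mulVec, dotProduct_sub]

lemma quadForm_smul_one (c : ℝ) (v : Fin p → ℝ) :
    quadForm (c • (1 : Matrix (Fin p) (Fin p) ℝ)) v = c * (v ⬝ᵥ v) := by
  simp only [quadForm, smul_mulVec, one_mulVec, dotProduct_smul, smul_eq_mul]

lemma quadForm_le_one_add_mul_of_posSemidef {A B : Matrix (Fin p) (Fin p) ℝ} {μ β δ : ℝ}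
    (hB : (B - μ • (1 : Matrix (Fin p) (Fin p) ℝ)).PosSemidef)
    (hAB : (β • (1 : Matrix (Fin p) (Fin p) ℝ) - (A - B)).PosSemidef)
    (hβ : β ≤ δ * μ) (hδ : 0 ≤ δ) (v : Fin p → ℝ) :
    quadForm A v ≤ (1 + δ) * quadForm B v := by
  have hμB := hB.quadForm_nonneg v
  have hβAB := hAB.quadForm_nonneg v
  rw [quadForm_sub, quadForm_smul_one] at hμB
  rw [quadForm_sub, quadForm_sub, quadForm_smul_one] at hβAB
  have hv : 0 ≤ v ⬝ᵥ v := Finset.sum_nonneg fun i _ => mul_self_nonneg (v i)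
  nlinarith [mul_le_mul_of_nonneg_right hβ hv, mul_le_mul_of_nonneg_left hμB hδ]

end QuadForm

theorem quadratic_regularity_of_lipschitz_hessian_general {p : ℕ}
    (C : Set (Fin p → ℝ)) (hCconv : Convex ℝ C)
    (F : (Fin p → ℝ) → ℝ) (g : (Fin p → ℝ) → Fin p → ℝ)
    (H : (Fin p → ℝ) → Matrix (Fin p) (Fin p) ℝ)
    (hgrad : ∀ x, ∃ f' : (Fin p → ℝ) →L[ℝ] ℝ, HasFDerivAt F f' x ∧ ∀ v, f' v = g x ⬝ᵥ v)
    (hhess : ∀ x, ∃ g' : (Fin p → ℝ) →L[ℝ] (Fin p → ℝ),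
      HasFDerivAt g g' x ∧ ∀ v, g' v = (H x).mulVec v)
    (μ M D : ℝ) (hμ : 0 < μ) (hM : 0 < M) (hD : 0 ≤ D)
    (hdiam : ∀ w ∈ C, ∀ w' ∈ C, euclNorm (w - w') ≤ D)
    (hsc : ∀ w ∈ C, (H w - μ • (1 : Matrix (Fin p) (Fin p) ℝ)).PosSemidef)
    (hLip : ∀ w ∈ C, ∀ w' ∈ C,
      ((M * euclNorm (w - w')) • (1 : Matrix (Fin p) (Fin p) ℝ) - (H w - H w')).PosSemidef ∧
      ((H w - H w') + (M * euclNorm (w - w')) • (1 : Matrix (Fin p) (Fin p) ℝ)).PosSemidef) :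
    ∀ w₀ ∈ C, ∀ w₁ ∈ C, ∀ w₂ ∈ C,
      F w₂ ≤ F w₁ + g w₁ ⬝ᵥ (w₂ - w₁) + (1 + M * D / μ) / 2 * quadForm (H w₀) (w₂ - w₁) ∧
      F w₂ ≥ F w₁ + g w₁ ⬝ᵥ (w₂ - w₁) + (1 + M * D / μ)⁻¹ / 2 * quadForm (H w₀) (w₂ - w₁) := by
  intro w₀ hw₀ w₁ hw₁ w₂ hw₂
  set v := w₂ - w₁
  set N := 1 + M * D / μ
  have hN : 0 < N := by positivity
  have hcompare : ∀ w ∈ C, ∀ w' ∈ C, quadForm (H w) v ≤ N * quadForm (H w') v :=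
    fun w hw w' hw' => quadForm_le_one_add_mul_of_posSemidef (hsc w' hw') (hLip w hw w' hw').1
      (by rw [div_mul_cancel₀ _ hμ.ne']; exact mul_le_mul_of_nonneg_left (hdiam w hw w' hw') hM.le)
      (by positivity) v
  have hseg : ∀ t ∈ Icc (0 : ℝ) 1, w₁ + t • v ∈ C :=
    fun t ht => hCconv.add_smul_sub_mem hw₁ hw₂ ht
  have hφ : ∀ t : ℝ, HasDerivAt (fun s => F (w₁ + s • v)) (g (w₁ + t • v) ⬝ᵥ v) t := fun t => by
    obtain ⟨f', hf', hf'v⟩ := hgrad (w₁ + t • v)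
    exact hf'v v ▸ hf'.hasDerivAt_comp_add_smul
  have hψ : ∀ t : ℝ, HasDerivAt (fun s => g (w₁ + s • v) ⬝ᵥ v) (quadForm (H (w₁ + t • v)) v) t :=
    fun t => by
      obtain ⟨g', hg', hg'v⟩ := hhess (w₁ + t • v)
      rw [quadForm, dotProduct_comm, ← hg'v]
      exact hg'.hasDerivAt_comp_add_smul.dotProduct_const v
  have hupper := le_add_add_half_of_hasDerivAt_le (fun t _ => hφ t) (fun t _ => hψ t)
    (fun t ht => hcompare _ (hseg t ht) w₀ hw₀)
  have hlower := add_add_half_le_of_le_hasDerivAt (fun t _ => hφ t) (fun t _ => hψ t)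
    (fun t ht => (inv_mul_le_iff₀ hN).2 (hcompare w₀ hw₀ _ (hseg t ht)))
  simp only [zero_smul, one_smul, add_zero, v, add_sub_cancel] at hupper hlower
  constructor <;> linarith

/-- If `F` is `μ`-strongly convex (`∇²F ⪰ μI`) with `M`-Lipschitz Hessian
(`−M‖w−w'‖ I ⪯ ∇²F(w) − ∇²F(w') ⪯ M‖w−w'‖ I`) on a compact convex set `C` of diameter `D`,
then `F` is quadratically regular on `C` with
`(1 + MD/μ)⁻¹ ≤ γℓ(C) ≤ γu(C) ≤ 1 + MD/μ`: the upper quadratic regularity bound holds with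
constant `1 + MD/μ` and the lower bound with constant `(1 + MD/μ)⁻¹`. -/
theorem quadratic_regularity_of_lipschitz_hessian {p : ℕ}
    (C : Set (Fin p → ℝ)) (hCcompact : IsCompact C) (hCconv : Convex ℝ C)
    (F : (Fin p → ℝ) → ℝ) (g : (Fin p → ℝ) → Fin p → ℝ)
    (H : (Fin p → ℝ) → Matrix (Fin p) (Fin p) ℝ)
    (hgrad : ∀ x, ∃ f' : (Fin p → ℝ) →L[ℝ] ℝ, HasFDerivAt F f' x ∧ ∀ v, f' v = g x ⬝ᵥ v)
    (hhess : ∀ x, ∃ g' : (Fin p → ℝ) →L[ℝ] (Fin p → ℝ),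
      HasFDerivAt g g' x ∧ ∀ v, g' v = (H x).mulVec v)
    (μ M D : ℝ) (hμ : 0 < μ) (hM : 0 < M) (hD : 0 ≤ D)
    (hdiam : ∀ w ∈ C, ∀ w' ∈ C, euclNorm (w - w') ≤ D)
    (hsc : ∀ w ∈ C, (H w - μ • (1 : Matrix (Fin p) (Fin p) ℝ)).PosSemidef)
    (hLip : ∀ w ∈ C, ∀ w' ∈ C,
      ((M * euclNorm (w - w')) • (1 : Matrix (Fin p) (Fin p) ℝ) - (H w - H w')).PosSemidef ∧
      ((H w - H w') + (M * euclNorm (w - w')) • (1 : Matrix (Fin p) (Fin p) ℝ)).PosSemidef) :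
    ∀ w₀ ∈ C, ∀ w₁ ∈ C, ∀ w₂ ∈ C,
      F w₂ ≤ F w₁ + g w₁ ⬝ᵥ (w₂ - w₁) + (1 + M * D / μ) / 2 * quadForm (H w₀) (w₂ - w₁) ∧
      F w₂ ≥ F w₁ + g w₁ ⬝ᵥ (w₂ - w₁) + (1 + M * D / μ)⁻¹ / 2 * quadForm (H w₀) (w₂ - w₁) :=
  quadratic_regularity_of_lipschitz_hessian_general C hCconv F g H hgrad hhess μ M D hμ hM hD hdiam
    hsc hLip
end
end

section
/- Let F(w) = (1/n)∑ᵢ φᵢ(aᵢᵀw) + (ν/2)‖w‖² with each φᵢ twice differentiable convex, ν > 0. Then for any w and any i, λ₁((∇²f(w)+νI)^{−1/2}(∇²fᵢ(w)+νI)(∇²f(w)+νI)^{−1/2}) ≤ 1 + n·lᵢ^ν(Φ''(Aw)^{1/2}A), where fᵢ(w)=φᵢ(aᵢᵀw), ∇²f(w) = (1/n)AᵀΦ''(Aw)A. -/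
/-! Put `S = AᵀΦ''(Aw)A + nνI = n(∇²f(w) + νI)` and `ℓ = aᵢᵀS⁻¹aᵢ`. Cauchy–Schwarz for the inner
product defined by `S`, applied to `S⁻¹aᵢ` and `x`, gives `(aᵢᵀx)² ≤ ℓ·xᵀSx`, i.e. `aᵢaᵢᵀ ⪯ ℓS`.
Hence `∇²fᵢ(w) + νI ⪯ n⁻¹AᵀΦ''(Aw)A + φᵢ''ℓS + νI = (1 + nφᵢ''ℓ)(∇²f(w) + νI)`, which is the
eigenvalue bound: for `H ≻ 0`, `λ₁(H^{-1/2}KH^{-1/2}) ≤ t` iff `K ⪯ tH`. -/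

open Matrix

open scoped MatrixOrder

namespace Matrix

variable {m : Type*} [Fintype m]

theorem PosSemidef.dotProduct_mulVec_sq_le {S : Matrix m m ℝ} (hS : S.PosSemidef)
    (x y : m → ℝ) : (x ⬝ᵥ S *ᵥ y) ^ 2 ≤ (x ⬝ᵥ S *ᵥ x) * (y ⬝ᵥ S *ᵥ y) := by
  let := S.toSeminormedAddCommGroup hS
  let := S.toInnerProductSpace hS
  have h := real_inner_mul_inner_self_le x y
  change (S *ᵥ y) ⬝ᵥ star x * ((S *ᵥ y) ⬝ᵥ star x)
    ≤ (S *ᵥ x) ⬝ᵥ star x * ((S *ᵥ y) ⬝ᵥ star y) at h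
  simp only [star_trivial] at h
  rw [dotProduct_comm (S *ᵥ y), dotProduct_comm (S *ᵥ x), dotProduct_comm (S *ᵥ y)] at h
  rwa [sq]

variable [DecidableEq m]

theorem PosDef.dotProduct_sq_le {S : Matrix m m ℝ} (hS : S.PosDef) (a x : m → ℝ) :
    (a ⬝ᵥ x) ^ 2 ≤ (a ⬝ᵥ S⁻¹ *ᵥ a) * (x ⬝ᵥ S *ᵥ x) := by
  set u := S⁻¹ *ᵥ a
  have hSu : S *ᵥ u = a := by
    rw [mulVec_mulVec, mul_nonsing_inv _ ((isUnit_iff_isUnit_det S).mp hS.isUnit), one_mulVec]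
  calc (a ⬝ᵥ x) ^ 2 = (x ⬝ᵥ S *ᵥ u) ^ 2 := by rw [hSu, dotProduct_comm]
    _ ≤ (x ⬝ᵥ S *ᵥ x) * (u ⬝ᵥ S *ᵥ u) := hS.posSemidef.dotProduct_mulVec_sq_le x u
    _ = (a ⬝ᵥ u) * (x ⬝ᵥ S *ᵥ x) := by rw [hSu, dotProduct_comm u, mul_comm]

theorem PosDef.vecMulVec_self_le_smul {S : Matrix m m ℝ} (hS : S.PosDef) (a : m → ℝ) :
    vecMulVec a a ≤ (a ⬝ᵥ S⁻¹ *ᵥ a) • S := by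
  have haa : (vecMulVec a a).PosSemidef := by simpa using posSemidef_vecMulVec_self_star a
  refine .of_dotProduct_mulVec_nonneg
    ((hS.isHermitian.smul (IsSelfAdjoint.all _)).sub haa.isHermitian) fun x => ?_
  have := hS.dotProduct_sq_le a x
  simp only [star_trivial, sub_mulVec, smul_mulVec, vecMulVec_mulVec, dotProduct_sub,
    dotProduct_smul, smul_eq_mul, op_smul_eq_smul]
  rw [dotProduct_comm x a]
  linarith

theorem PosSemidef.smul_vecMulVec_add_smul_one_le {M : Matrix m m ℝ} (hM : M.PosSemidef)
    {N ν c : ℝ} (hN : 0 < N) (hν : 0 < ν) (hc : 0 ≤ c) (a : m → ℝ) :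
    c • vecMulVec a a + ν • 1 ≤
      (1 + N * (c * (a ⬝ᵥ (M + (N * ν) • 1)⁻¹ *ᵥ a))) • (N⁻¹ • M + ν • 1) := by
  set S := M + (N * ν) • (1 : Matrix m m ℝ)
  have hS : S.PosDef := PosDef.posSemidef_add hM (PosDef.one.smul (mul_pos hN hν))
  set t := a ⬝ᵥ S⁻¹ *ᵥ a
  have hsplit : (1 + N * (c * t)) • (N⁻¹ • M + ν • 1) - (c • vecMulVec a a + ν • 1)
      = N⁻¹ • M + c • (t • S - vecMulVec a a) := by
    simp only [S]
    match_scalars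
    · field_simp
    · ring
    · ring
  rw [le_iff, hsplit]
  exact (hM.smul (inv_nonneg.2 hN.le)).add ((hS.vecMulVec_self_le_smul a).smul hc)

end Matrix

theorem glm_hessian_term_eigenvalue_bound_general {n p : ℕ}
    (a : Fin n → Fin p → ℝ) (φ'' : Fin n → ℝ → ℝ)
    (hφnn : ∀ i x, 0 ≤ φ'' i x)
    (ν : ℝ) (hν : 0 < ν) (w : Fin p → ℝ) (i : Fin n) :
    ((1 + (n : ℝ) * (φ'' i (a i ⬝ᵥ w) *
          (a i ⬝ᵥ ((Matrix.of a)ᴴ * Matrix.diagonal (fun j => φ'' j (a j ⬝ᵥ w)) * Matrix.of a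
              + ((n : ℝ) * ν) • (1 : Matrix (Fin p) (Fin p) ℝ))⁻¹.mulVec (a i))))
        • ((n : ℝ)⁻¹ • ((Matrix.of a)ᴴ * Matrix.diagonal (fun j => φ'' j (a j ⬝ᵥ w))
              * Matrix.of a) + ν • (1 : Matrix (Fin p) (Fin p) ℝ))
      - (φ'' i (a i ⬝ᵥ w) • vecMulVec (a i) (a i)
          + ν • (1 : Matrix (Fin p) (Fin p) ℝ))).PosSemidef := by
  have hHessian : ((Matrix.of a)ᴴ * Matrix.diagonal (fun j => φ'' j (a j ⬝ᵥ w))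
      * Matrix.of a).PosSemidef :=
    (PosSemidef.diagonal fun j => hφnn j _).conjTranspose_mul_mul_same _
  have hn : (0 : ℝ) < n := by exact_mod_cast i.pos
  exact le_iff.mp (hHessian.smul_vecMulVec_add_smul_one_le hn hν (hφnn i _) (a i))

/-- Per-term eigenvalue bound for GLM Hessians: for
`F(w) = (1/n)∑ᵢ φᵢ(aᵢᵀw) + (ν/2)‖w‖²`, for any `w` and any `i`,
`λ₁((∇²f(w)+νI)^{−1/2}(∇²fᵢ(w)+νI)(∇²f(w)+νI)^{−1/2}) ≤ 1 + n·lᵢ^ν(Φ''(Aw)^{1/2}A)`,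
where `∇²fᵢ(w) = φᵢ''(aᵢᵀw)aᵢaᵢᵀ`, `∇²f(w) = (1/n)AᵀΦ''(Aw)A`, and
`lᵢ^ν(Φ''(Aw)^{1/2}A) = φᵢ''(aᵢᵀw)·aᵢᵀ(AᵀΦ''(Aw)A + nνI)⁻¹aᵢ` is the `i`-th ridge leverage
score.  The eigenvalue bound is expressed in the equivalent Loewner-order form
`∇²fᵢ(w)+νI ⪯ (1 + n·lᵢ)·(∇²f(w)+νI)`. -/
theorem glm_hessian_term_eigenvalue_bound {n p : ℕ} (hn : 0 < n)
    (a : Fin n → Fin p → ℝ) (φ φ' φ'' : Fin n → ℝ → ℝ)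
    (hφ' : ∀ i x, HasDerivAt (φ i) (φ' i x) x)
    (hφ'' : ∀ i x, HasDerivAt (φ' i) (φ'' i x) x)
    (hφnn : ∀ i x, 0 ≤ φ'' i x)
    (ν : ℝ) (hν : 0 < ν) (w : Fin p → ℝ) (i : Fin n) :
    ((1 + (n : ℝ) * (φ'' i (a i ⬝ᵥ w) *
          (a i ⬝ᵥ ((Matrix.of a)ᴴ * Matrix.diagonal (fun j => φ'' j (a j ⬝ᵥ w)) * Matrix.of a
              + ((n : ℝ) * ν) • (1 : Matrix (Fin p) (Fin p) ℝ))⁻¹.mulVec (a i))))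
        • ((n : ℝ)⁻¹ • ((Matrix.of a)ᴴ * Matrix.diagonal (fun j => φ'' j (a j ⬝ᵥ w))
              * Matrix.of a) + ν • (1 : Matrix (Fin p) (Fin p) ℝ))
      - (φ'' i (a i ⬝ᵥ w) • vecMulVec (a i) (a i)
          + ν • (1 : Matrix (Fin p) (Fin p) ℝ))).PosSemidef :=
  glm_hessian_term_eigenvalue_bound_general a φ'' hφnn ν hν w i
end

section
/- Let F : ℝ^p → ℝ be twice differentiable, μ-strongly convex with M-Lipschitz Hessian, and suppose w, w', w'', and the minimizer w⋆ all lie in the ball B(w, εμ/(2M)) for some ε ∈ (0,1), where w'' = w' − (1/(1+ε))∇²F(w)⁻¹∇F(w'). Then F(w'') − F(w⋆) ≤ (1 − 1/(1+ε)²)(F(w') − F(w⋆)). -/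
/-!
On the ball of radius `εμ/(2M)` around `w`, the Lipschitz bound moves the Hessian by at most
`εμ/2 ⪯ (ε/2)∇²F(w)`, so along every segment of the ball `∇²F(w)/(1+ε) ⪯ ∇²F ⪯ (1+ε)∇²F(w)`, and
Taylor's formula sandwiches `F` between two quadratic models built on the frozen Hessian
`∇²F(w)`. Put `T = ∇F(w')ᵀ∇²F(w)⁻¹∇F(w')`. The upper model shows that the damped step decreases
`F` by at least `T/(2(1+ε))`; the lower model at `w⋆` is bounded below by its global minimum
(complete the square), which gives `F(w') - F(w⋆) ≤ (1+ε)T/2`. Dividing, the gap shrinks by the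
factor `1 - 1/(1+ε)²`.
-/

open Matrix

noncomputable section

open Set

section QuadraticForm

variable {n : Type*} [Fintype n]

lemma dotProduct_mulVec_le_of_posSemidef_sub {A B : Matrix n n ℝ} (h : (A - B).PosSemidef)
    (v : n → ℝ) : v ⬝ᵥ B *ᵥ v ≤ v ⬝ᵥ A *ᵥ v := by
  have := h.dotProduct_mulVec_nonneg v
  simp only [star_trivial, sub_mulVec, dotProduct_sub] at this
  linarith

lemma mul_dotProduct_self_le_of_posSemidef_sub_smul_one [DecidableEq n] {A : Matrix n n ℝ}
    {c : ℝ} (h : (A - c • 1).PosSemidef) (v : n → ℝ) : c * (v ⬝ᵥ v) ≤ v ⬝ᵥ A *ᵥ v := by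
  simpa only [smul_mulVec, one_mulVec, dotProduct_smul, smul_eq_mul]
    using dotProduct_mulVec_le_of_posSemidef_sub h v

lemma abs_dotProduct_mulVec_le_of_posSemidef [DecidableEq n] {D : Matrix n n ℝ} {c : ℝ}
    (h₁ : (c • 1 - D).PosSemidef) (h₂ : (D + c • 1).PosSemidef) (v : n → ℝ) :
    |v ⬝ᵥ D *ᵥ v| ≤ c * (v ⬝ᵥ v) := by
  have hlow := h₂.dotProduct_mulVec_nonneg v
  simp only [star_trivial, add_mulVec, smul_mulVec, one_mulVec, dotProduct_add, dotProduct_smul,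
    smul_eq_mul] at hlow
  have hup := dotProduct_mulVec_le_of_posSemidef_sub h₁ v
  simp only [smul_mulVec, one_mulVec, dotProduct_smul, smul_eq_mul] at hup
  exact abs_le.2 ⟨by linarith, hup⟩

/-- Completing the square: the minimum is attained at `d = -s • u`. -/
lemma Matrix.PosSemidef.neg_mul_le_dotProduct_add_quad {A : Matrix n n ℝ} (hA : A.PosSemidef)
    {u b : n → ℝ} (hu : A *ᵥ u = b) {s : ℝ} (hs : 0 < s) (d : n → ℝ) :
    -(s * (b ⬝ᵥ u)) / 2 ≤ b ⬝ᵥ d + d ⬝ᵥ A *ᵥ d / (2 * s) := by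
  have hsymm : u ⬝ᵥ A *ᵥ d = b ⬝ᵥ d := by
    rw [dotProduct_mulVec, ← mulVec_transpose, ← conjTranspose_eq_transpose_of_trivial, hA.1, hu,
      dotProduct_comm]
  have hsq := hA.dotProduct_mulVec_nonneg (d + s • u)
  simp only [star_trivial, mulVec_add, mulVec_smul, hu, dotProduct_add, add_dotProduct,
    dotProduct_smul, smul_dotProduct, smul_eq_mul, hsymm] at hsq
  have hgap : b ⬝ᵥ d + d ⬝ᵥ A *ᵥ d / (2 * s) - -(s * (b ⬝ᵥ u)) / 2
      = (d ⬝ᵥ A *ᵥ d + s * (b ⬝ᵥ d) + s * (d ⬝ᵥ b + s * (u ⬝ᵥ b))) / (2 * s) := by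
    rw [dotProduct_comm d b, dotProduct_comm u b]
    field_simp
    ring
  linarith [div_nonneg hsq (by positivity : (0 : ℝ) ≤ 2 * s)]

lemma dotProduct_add_half_mul_quad_damped_step {A : Matrix n n ℝ} {u b : n → ℝ}
    (hu : A *ᵥ u = b) {s : ℝ} (hs : s ≠ 0) :
    b ⬝ᵥ -((1 / s) • u) + s * (-((1 / s) • u) ⬝ᵥ A *ᵥ -((1 / s) • u)) / 2
      = -(b ⬝ᵥ u / (2 * s)) := by
  simp only [mulVec_neg, mulVec_smul, hu, dotProduct_neg, neg_dotProduct, dotProduct_smul,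
    smul_dotProduct, smul_eq_mul, dotProduct_comm u b]
  field_simp
  ring

end QuadraticForm

lemma le_one_add_mul_and_le_one_add_mul_of_abs_sub_le {a b ε : ℝ} (hε0 : 0 ≤ ε) (hε1 : ε ≤ 1)
    (h : |a - b| ≤ ε / 2 * b) : a ≤ (1 + ε) * b ∧ b ≤ (1 + ε) * a := by
  obtain ⟨h₁, h₂⟩ := abs_le.1 h
  constructor <;> nlinarith

section Taylor

lemma le_add_deriv_add_half_of_deriv2_le {f f' f'' : ℝ → ℝ} {c : ℝ}
    (hf : ∀ t, HasDerivAt f (f' t) t) (hf' : ∀ t, HasDerivAt f' (f'' t) t)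
    (hc : ∀ t ∈ Icc (0 : ℝ) 1, f'' t ≤ c) : f 1 ≤ f 0 + f' 0 + c / 2 := by
  have hslope : ∀ t ∈ Icc (0 : ℝ) 1, f' t ≤ f' 0 + c * t :=
    image_le_of_deriv_right_le_deriv_boundary
      (fun t _ ↦ (hf' t).continuousAt.continuousWithinAt) (fun t _ ↦ (hf' t).hasDerivWithinAt)
      (by simp) (by fun_prop)
      (fun t _ ↦ (((hasDerivAt_id t).const_mul c).const_add (f' 0)).hasDerivWithinAt)
      (fun t ht ↦ by simpa using hc t (Ico_subset_Icc_self ht))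
  have hB (t : ℝ) : HasDerivAt (fun t ↦ f 0 + f' 0 * t + c * t ^ 2 / 2) (f' 0 + c * t) t := by
    refine ((((hasDerivAt_id t).const_mul (f' 0)).const_add (f 0)).fun_add
      (((hasDerivAt_pow 2 t).const_mul c).div_const 2)).congr_deriv ?_
    norm_num
    ring
  simpa using image_le_of_deriv_right_le_deriv_boundary
    (fun t _ ↦ (hf t).continuousAt.continuousWithinAt) (fun t _ ↦ (hf t).hasDerivWithinAt)
    (by simp) (by fun_prop) (fun t _ ↦ (hB t).hasDerivWithinAt)
    (fun t ht ↦ hslope t (Ico_subset_Icc_self ht)) (right_mem_Icc.2 zero_le_one)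

lemma add_deriv_add_half_le_of_le_deriv2 {f f' f'' : ℝ → ℝ} {c : ℝ}
    (hf : ∀ t, HasDerivAt f (f' t) t) (hf' : ∀ t, HasDerivAt f' (f'' t) t)
    (hc : ∀ t ∈ Icc (0 : ℝ) 1, c ≤ f'' t) : f 0 + f' 0 + c / 2 ≤ f 1 := by
  have := le_add_deriv_add_half_of_deriv2_le (fun t ↦ (hf t).neg) (fun t ↦ (hf' t).neg)
    (c := -c) fun t ht ↦ neg_le_neg (hc t ht)
  simp only [Pi.neg_apply] at this
  linarith

variable {ι : Type*} [Fintype ι]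

def HasGradient (F : (ι → ℝ) → ℝ) (g : (ι → ℝ) → ι → ℝ) : Prop :=
  ∀ x, ∃ f' : (ι → ℝ) →L[ℝ] ℝ, HasFDerivAt F f' x ∧ ∀ v, f' v = g x ⬝ᵥ v

def HasJacobian (g : (ι → ℝ) → ι → ℝ) (H : (ι → ℝ) → Matrix ι ι ℝ) : Prop :=
  ∀ x, ∃ g' : (ι → ℝ) →L[ℝ] (ι → ℝ), HasFDerivAt g g' x ∧ ∀ v, g' v = H x *ᵥ v

variable {F : (ι → ℝ) → ℝ} {g : (ι → ℝ) → ι → ℝ} {H : (ι → ℝ) → Matrix ι ι ℝ}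

lemma hasDerivAt_add_smul (x d : ι → ℝ) (t : ℝ) : HasDerivAt (fun s : ℝ ↦ x + s • d) d t := by
  simpa using ((hasDerivAt_id t).smul_const d).const_add x

lemma HasGradient.hasDerivAt_comp_add_smul (hF : HasGradient F g) (x d : ι → ℝ) (t : ℝ) :
    HasDerivAt (fun s : ℝ ↦ F (x + s • d)) (g (x + t • d) ⬝ᵥ d) t := by
  obtain ⟨f', hf', hf'v⟩ := hF (x + t • d)
  rw [← hf'v]
  exact hf'.comp_hasDerivAt t (hasDerivAt_add_smul x d t)

lemma HasJacobian.hasDerivAt_dotProduct_comp_add_smul (hg : HasJacobian g H) (x d : ι → ℝ)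
    (t : ℝ) : HasDerivAt (fun s : ℝ ↦ g (x + s • d) ⬝ᵥ d) (d ⬝ᵥ H (x + t • d) *ᵥ d) t := by
  obtain ⟨g', hg', hg'v⟩ := hg (x + t • d)
  have hcomp := hasDerivAt_pi.1 (hg'.comp_hasDerivAt t (hasDerivAt_add_smul x d t))
  have hsum : HasDerivAt (fun s : ℝ ↦ ∑ i, g (x + s • d) i * d i) (∑ i, g' d i * d i) t :=
    HasDerivAt.fun_sum fun i _ ↦ (hcomp i).mul_const (d i)
  rw [dotProduct_comm, ← hg'v]
  exact hsum

lemma le_add_dotProduct_add_half_of_quad_le (hF : HasGradient F g) (hg : HasJacobian g H)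
    {x d : ι → ℝ} {c : ℝ} (hc : ∀ t ∈ Icc (0 : ℝ) 1, d ⬝ᵥ H (x + t • d) *ᵥ d ≤ c) :
    F (x + d) ≤ F x + g x ⬝ᵥ d + c / 2 := by
  simpa using le_add_deriv_add_half_of_deriv2_le (hF.hasDerivAt_comp_add_smul x d)
    (hg.hasDerivAt_dotProduct_comp_add_smul x d) hc

lemma add_dotProduct_add_half_le_of_le_quad (hF : HasGradient F g) (hg : HasJacobian g H)
    {x d : ι → ℝ} {c : ℝ} (hc : ∀ t ∈ Icc (0 : ℝ) 1, c ≤ d ⬝ᵥ H (x + t • d) *ᵥ d) :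
    F x + g x ⬝ᵥ d + c / 2 ≤ F (x + d) := by
  simpa using add_deriv_add_half_le_of_le_deriv2 (hF.hasDerivAt_comp_add_smul x d)
    (hg.hasDerivAt_dotProduct_comp_add_smul x d) hc

end Taylor

section Ball

variable {p : ℕ}

def euclClosedBall (w : Fin p → ℝ) (r : ℝ) : Set (Fin p → ℝ) := {x | euclNorm (x - w) ≤ r}

lemma euclNorm_eq_norm_toLp (v : Fin p → ℝ) : euclNorm v = ‖WithLp.toLp 2 v‖ := by
  simp [euclNorm, EuclideanSpace.norm_eq, dotProduct, sq]

lemma convex_euclClosedBall (w : Fin p → ℝ) (r : ℝ) : Convex ℝ (euclClosedBall w r) := by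
  have : euclClosedBall w r = (WithLp.linearEquiv 2 ℝ (Fin p → ℝ)).symm ⁻¹'
      Metric.closedBall (WithLp.toLp 2 w) r := by
    ext x
    simp [euclClosedBall, euclNorm_eq_norm_toLp, dist_eq_norm]
  rw [this]
  exact (convex_closedBall _ _).linear_preimage _

def HessianLipschitzWith (M : ℝ) (H : (Fin p → ℝ) → Matrix (Fin p) (Fin p) ℝ) : Prop :=
  ∀ x y, ((M * euclNorm (x - y)) • (1 : Matrix (Fin p) (Fin p) ℝ) - (H x - H y)).PosSemidef ∧
    ((H x - H y) + (M * euclNorm (x - y)) • (1 : Matrix (Fin p) (Fin p) ℝ)).PosSemidef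

variable {H : (Fin p → ℝ) → Matrix (Fin p) (Fin p) ℝ} {μ M ε : ℝ} {w x y : Fin p → ℝ}

lemma HessianLipschitzWith.quad_comparable (hLip : HessianLipschitzWith M H) (hM : 0 < M)
    (hε0 : 0 ≤ ε) (hε1 : ε ≤ 1) (hsc : (H w - μ • 1).PosSemidef)
    (hx : x ∈ euclClosedBall w (ε * μ / (2 * M))) (v : Fin p → ℝ) :
    v ⬝ᵥ H x *ᵥ v ≤ (1 + ε) * (v ⬝ᵥ H w *ᵥ v) ∧ v ⬝ᵥ H w *ᵥ v ≤ (1 + ε) * (v ⬝ᵥ H x *ᵥ v) := by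
  have hvv : 0 ≤ v ⬝ᵥ v := by simpa using dotProduct_self_star_nonneg v
  have hμv := mul_dotProduct_self_le_of_posSemidef_sub_smul_one hsc v
  have hMx : M * euclNorm (x - w) ≤ ε * μ / 2 := by
    have := (le_div_iff₀ (show (0 : ℝ) < 2 * M by positivity)).1 hx
    linarith
  have hdiff := abs_dotProduct_mulVec_le_of_posSemidef (hLip x w).1 (hLip x w).2 v
  rw [sub_mulVec, dotProduct_sub] at hdiff
  refine le_one_add_mul_and_le_one_add_mul_of_abs_sub_le hε0 hε1 ?_
  nlinarith

variable {F : (Fin p → ℝ) → ℝ} {g : (Fin p → ℝ) → Fin p → ℝ}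

theorem quadratic_regularity_on_euclClosedBall (hF : HasGradient F g) (hg : HasJacobian g H)
    (hLip : HessianLipschitzWith M H) (hM : 0 < M) (hε0 : 0 ≤ ε) (hε1 : ε ≤ 1)
    (hsc : (H w - μ • 1).PosSemidef) (hx : x ∈ euclClosedBall w (ε * μ / (2 * M)))
    (hy : y ∈ euclClosedBall w (ε * μ / (2 * M))) :
    F y ≤ F x + g x ⬝ᵥ (y - x) + (1 + ε) * ((y - x) ⬝ᵥ H w *ᵥ (y - x)) / 2 ∧
      F x + g x ⬝ᵥ (y - x) + (y - x) ⬝ᵥ H w *ᵥ (y - x) / (2 * (1 + ε)) ≤ F y := by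
  have hseg (t : ℝ) (ht : t ∈ Icc (0 : ℝ) 1) := hLip.quad_comparable hM hε0 hε1 hsc
    ((convex_euclClosedBall w _).add_smul_sub_mem hx hy ht) (y - x)
  have hxy : x + (y - x) = y := add_sub_cancel x y
  constructor
  · simpa only [hxy] using le_add_dotProduct_add_half_of_quad_le hF hg fun t ht ↦ (hseg t ht).1
  · have h := add_dotProduct_add_half_le_of_le_quad hF hg fun t ht ↦
      (div_le_iff₀' (by linarith)).2 (hseg t ht).2
    rwa [hxy, div_div, mul_comm (1 + ε)] at h

end Ball

theorem lazy_newton_one_step_general {p : ℕ}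
    (F : (Fin p → ℝ) → ℝ) (g : (Fin p → ℝ) → Fin p → ℝ)
    (H : (Fin p → ℝ) → Matrix (Fin p) (Fin p) ℝ)
    (hgrad : ∀ x, ∃ f' : (Fin p → ℝ) →L[ℝ] ℝ, HasFDerivAt F f' x ∧ ∀ v, f' v = g x ⬝ᵥ v)
    (hhess : ∀ x, ∃ g' : (Fin p → ℝ) →L[ℝ] (Fin p → ℝ),
      HasFDerivAt g g' x ∧ ∀ v, g' v = (H x).mulVec v)
    (μ M ε : ℝ) (hμ : 0 < μ) (hM : 0 < M) (hε0 : 0 < ε) (hε1 : ε < 1)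
    (hsc : ∀ x, (H x - μ • (1 : Matrix (Fin p) (Fin p) ℝ)).PosSemidef)
    (hLip : ∀ x y,
      ((M * euclNorm (x - y)) • (1 : Matrix (Fin p) (Fin p) ℝ) - (H x - H y)).PosSemidef ∧
      ((H x - H y) + (M * euclNorm (x - y)) • (1 : Matrix (Fin p) (Fin p) ℝ)).PosSemidef)
    (w w' w'' wstar : Fin p → ℝ)
    (hball' : euclNorm (w' - w) ≤ ε * μ / (2 * M))
    (hball'' : euclNorm (w'' - w) ≤ ε * μ / (2 * M))
    (hballstar : euclNorm (wstar - w) ≤ ε * μ / (2 * M))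
    (hstep : w'' = w' - (1 / (1 + ε)) • (H w)⁻¹.mulVec (g w')) :
    F w'' - F wstar ≤ (1 - 1 / (1 + ε) ^ 2) * (F w' - F wstar) := by
  have hε : 0 < 1 + ε := by linarith
  have hHw : (H w).PosDef := by
    simpa using PosDef.posSemidef_add (hsc w) (PosDef.one.smul hμ)
  set u := (H w)⁻¹ *ᵥ g w'
  have hu : H w *ᵥ u = g w' := by
    rw [mulVec_mulVec, mul_nonsing_inv _ ((isUnit_iff_isUnit_det _).1 hHw.isUnit), one_mulVec]
  set T := g w' ⬝ᵥ u
  have hdecrease : F w'' ≤ F w' - T / (2 * (1 + ε)) := by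
    have h := (quadratic_regularity_on_euclClosedBall hgrad hhess hLip hM hε0.le hε1.le (hsc w)
      hball' hball'').1
    rw [show w'' - w' = -((1 / (1 + ε)) • u) by rw [hstep, sub_sub_cancel_left]] at h
    linarith [dotProduct_add_half_mul_quad_damped_step hu hε.ne']
  have hgap : F w' - F wstar ≤ (1 + ε) * T / 2 := by
    have h := (quadratic_regularity_on_euclClosedBall hgrad hhess hLip hM hε0.le hε1.le (hsc w)
      hball' hballstar).2
    linarith [hHw.posSemidef.neg_mul_le_dotProduct_add_quad hu hε (wstar - w')]
  have hgap_div : (F w' - F wstar) / (1 + ε) ^ 2 ≤ T / (2 * (1 + ε)) := by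
    rw [div_le_div_iff₀ (by positivity) (by positivity)]
    nlinarith
  calc F w'' - F wstar ≤ (F w' - F wstar) - T / (2 * (1 + ε)) := by linarith
    _ ≤ (F w' - F wstar) - (F w' - F wstar) / (1 + ε) ^ 2 := by linarith
    _ = (1 - 1 / (1 + ε) ^ 2) * (F w' - F wstar) := by ring

/-- One-step improvement for lazy Newton's method: if `F` is `μ`-strongly convex with
`M`-Lipschitz Hessian, and `w, w', w'', w⋆` all lie in the ball `B(w, εμ/(2M))` with `w⋆` the
minimizer and `w'' = w' − (1/(1+ε))∇²F(w)⁻¹∇F(w')`, then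
`F(w'') − F(w⋆) ≤ (1 − 1/(1+ε)²)(F(w') − F(w⋆))`. -/
theorem lazy_newton_one_step {p : ℕ}
    (F : (Fin p → ℝ) → ℝ) (g : (Fin p → ℝ) → Fin p → ℝ)
    (H : (Fin p → ℝ) → Matrix (Fin p) (Fin p) ℝ)
    (hgrad : ∀ x, ∃ f' : (Fin p → ℝ) →L[ℝ] ℝ, HasFDerivAt F f' x ∧ ∀ v, f' v = g x ⬝ᵥ v)
    (hhess : ∀ x, ∃ g' : (Fin p → ℝ) →L[ℝ] (Fin p → ℝ),
      HasFDerivAt g g' x ∧ ∀ v, g' v = (H x).mulVec v)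
    (μ M ε : ℝ) (hμ : 0 < μ) (hM : 0 < M) (hε0 : 0 < ε) (hε1 : ε < 1)
    (hsc : ∀ x, (H x - μ • (1 : Matrix (Fin p) (Fin p) ℝ)).PosSemidef)
    (hLip : ∀ x y,
      ((M * euclNorm (x - y)) • (1 : Matrix (Fin p) (Fin p) ℝ) - (H x - H y)).PosSemidef ∧
      ((H x - H y) + (M * euclNorm (x - y)) • (1 : Matrix (Fin p) (Fin p) ℝ)).PosSemidef)
    (w w' w'' wstar : Fin p → ℝ)
    (hmin : ∀ y, F wstar ≤ F y)
    (hball' : euclNorm (w' - w) ≤ ε * μ / (2 * M))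
    (hball'' : euclNorm (w'' - w) ≤ ε * μ / (2 * M))
    (hballstar : euclNorm (wstar - w) ≤ ε * μ / (2 * M))
    (hstep : w'' = w' - (1 / (1 + ε)) • (H w)⁻¹.mulVec (g w')) :
    F w'' - F wstar ≤ (1 - 1 / (1 + ε) ^ 2) * (F w' - F wstar) :=
  lazy_newton_one_step_general F g H hgrad hhess μ M ε hμ hM hε0 hε1 hsc hLip w w' w'' wstar hball'
    hball'' hballstar hstep
end
end
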